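/- Let K(x,y) = Σ_k λ_k φ_k(x) φ_k(y) be a Mercer kernel on [0,1]² with λ_k ≍ k^{−2α} and (φ_k) an orthonormal basis of L²([0,1]). Let H(K)^{⊗d} be the tensor product RKHS with norm ‖A‖² = Σ_{k_1,…,k_d} (λ_{k_1}⋯λ_{k_d})^{−1} A[φ_{k_1},…,φ_{k_d}]². Let M = span{ φ_{μ_1}(z_1)⋯φ_{μ_{d1}}(z_{d1}) : 1 ≤ μ_j ≤ m } and L = span{ φ_{η_1}(z_{d1+1})⋯φ_{η_{d2}}(z_d) : 1 ≤ η_j ≤ ℓ }, where d1 + d2 = d. Then for any A with ‖A‖_{H(K)^{⊗d}} < ∞, ‖A − A ×_x P_M ×_y P_L‖²_{L²} ≤ C (d1·m^{−2α} + d2·ℓ^{−2α}) ‖A‖²_{H(K)^{⊗d}} for an absolute constant C. -/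

import Mathlib

open MeasureTheory

/-- Lebesgue measure on `[0,1]`. -/
noncomputable def unitMeasure : Measure ℝ := volume.restrict (Set.Icc 0 1)

/-- The coefficient `A[φ_{k_1},…,φ_{k_d}]` of `A ∈ L²([0,1]^d)` against the
product of one-dimensional basis functions. -/
noncomputable def tensorCoef (d : ℕ) (φ : ℕ → Lp ℝ 2 unitMeasure)
    (A : Lp ℝ 2 (Measure.pi fun _ : Fin d => unitMeasure)) (kv : Fin d → ℕ) : ℝ :=
  ∫ z, A z * ∏ j, (φ (kv j) : ℝ → ℝ) (z j) ∂(Measure.pi fun _ : Fin d => unitMeasure)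

/-!
The products `z ↦ ∏ j, φ (kv j) (z j)` form a Hilbert basis of `L²([0,1]^d)`. Orthonormality is
Fubini; completeness follows by induction on `d` from the two-factor case, where a function `f`
orthogonal to every `g i ⊗ h j` has partial inner products `x ↦ ∫ f (x, y) h j y dy` orthogonal
to every `g i`, hence zero, so almost every slice of `f` is orthogonal to every `h j` and vanishes.
By Parseval, `‖A - Ā‖²` is the sum of the squares of the dropped coefficients. A dropped
multi-index has a coordinate `k ≥ m` in the first block or `k ≥ ℓ` in the second, so
`λ_{k_1} ⋯ λ_{k_d} ≤ c2^d m^{-2α}` (resp. `c2^d ℓ^{-2α}`), and each dropped coefficient squared is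
at most `c2^d (d1 m^{-2α} + d2 ℓ^{-2α})` times its term in the RKHS norm.
-/

instance : IsProbabilityMeasure unitMeasure :=
  ⟨by simp [unitMeasure]⟩

section Orthogonal
variable {𝕜 E ι : Type*} [RCLike 𝕜] [NormedAddCommGroup E] [InnerProductSpace 𝕜 E]

theorem Submodule.mem_orthogonal_span_range_iff {v : ι → E} {x : E} :
    x ∈ (span 𝕜 (Set.range v))ᗮ ↔ ∀ i, inner 𝕜 (v i) x = 0 := by
  refine ⟨fun hx i => (mem_orthogonal _ x).1 hx _ (subset_span ⟨i, rfl⟩), fun h => ?_⟩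
  rw [mem_orthogonal]
  intro u hu
  induction hu using span_induction with
  | mem u hu => obtain ⟨i, rfl⟩ := hu; exact h i
  | zero => exact inner_zero_left x
  | add u w _ _ hu hw => rw [inner_add_left, hu, hw, add_zero]
  | smul c u _ hu => rw [inner_smul_left, hu, mul_zero]

end Orthogonal

namespace MeasureTheory

theorem memLp_two_fintype_prod {ι : Type*} [Fintype ι] {X : ι → Type*}
    [∀ i, MeasurableSpace (X i)] {μ : ∀ i, Measure (X i)} [∀ i, SigmaFinite (μ i)]
    {v : ∀ i, X i → ℝ} (hv : ∀ i, MemLp (v i) 2 (μ i)) :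
    MemLp (fun z : ∀ i, X i => ∏ i, v i (z i)) 2 (Measure.pi μ) := by
  refine (memLp_two_iff_integrable_sq (Finset.aestronglyMeasurable_fun_prod _ fun i _ =>
    (hv i).1.comp_quasiMeasurePreserving (Measure.quasiMeasurePreserving_eval _ i))).2 ?_
  simpa only [Function.comp_apply, Function.eval, ← Finset.prod_pow] using
    Integrable.fintype_prod_dep fun i => (hv i).integrable_sq

variable {X Y ι κ : Type*} [MeasurableSpace X] [MeasurableSpace Y] {μ : Measure X} {ν : Measure Y}

theorem Lp.inner_eq_integral_mul (u v : Lp ℝ 2 μ) : inner ℝ u v = ∫ x, u x * v x ∂μ := by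
  simp only [L2.inner_def, RCLike.inner_apply, conj_trivial, mul_comm]

theorem MemLp.inner_toLp_toLp {f g : X → ℝ} (hf : MemLp f 2 μ) (hg : MemLp g 2 μ) :
    inner ℝ (hf.toLp f) (hg.toLp g) = ∫ x, f x * g x ∂μ := by
  rw [Lp.inner_eq_integral_mul]
  refine integral_congr_ae ?_
  filter_upwards [hf.coeFn_toLp, hg.coeFn_toLp] with x hfx hgx
  rw [hfx, hgx]

theorem sq_integral_mul_le {f g : X → ℝ} (hf : MemLp f 2 μ) (hg : MemLp g 2 μ) :
    (∫ x, f x * g x ∂μ) ^ 2 ≤ (∫ x, f x ^ 2 ∂μ) * ∫ x, g x ^ 2 ∂μ := by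
  simp only [sq, ← hf.inner_toLp_toLp hg, ← hf.inner_toLp_toLp hf, ← hg.inner_toLp_toLp hg]
  exact real_inner_mul_inner_self_le _ _

/-- Completeness in `L²(μ)`, phrased on functions rather than on `Lp` classes so that it can be
transported along measure-preserving maps and Fubini slices. -/
def IsCompleteSystem (μ : Measure X) (g : ι → X → ℝ) : Prop :=
  ∀ F : X → ℝ, MemLp F 2 μ → (∀ i, ∫ x, F x * g i x ∂μ = 0) → F =ᵐ[μ] 0

theorem IsCompleteSystem.congr_ae {g g' : ι → X → ℝ} (hg : IsCompleteSystem μ g)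
    (hgg' : ∀ i, g' i =ᵐ[μ] g i) : IsCompleteSystem μ g' := fun F hF hF0 =>
  hg F hF fun i => by
    rw [← hF0 i]
    exact integral_congr_ae (by filter_upwards [hgg' i] with x hx; rw [hx])

theorem IsCompleteSystem.of_measurePreserving {e : X ≃ᵐ Y} (he : MeasurePreserving e μ ν)
    {g : ι → Y → ℝ} {g' : κ → X → ℝ} (hg : IsCompleteSystem ν g)
    (hgg' : ∀ i, ∃ k, g' k = g i ∘ e) : IsCompleteSystem μ g' := by
  intro F hF hF0
  have hFe : F ∘ e.symm =ᵐ[ν] 0 := hg _ (hF.comp_measurePreserving he.symm) fun i => by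
    obtain ⟨k, hk⟩ := hgg' i
    rw [← he.integral_comp' fun y => (F ∘ e.symm) y * g i y, ← hF0 k, hk]
    simp only [Function.comp_apply, MeasurableEquiv.symm_apply_apply]
  filter_upwards [he.quasiMeasurePreserving.ae_eq_comp hFe] with x hx
  simpa using hx

theorem isCompleteSystem_of_topologicalClosure_span_eq_top {v : ι → Lp ℝ 2 μ}
    (hv : (Submodule.span ℝ (Set.range v)).topologicalClosure = ⊤) :
    IsCompleteSystem μ fun i => v i := by
  intro F hF hFv
  have hperp : hF.toLp F ∈ (Submodule.span ℝ (Set.range v))ᗮ :=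
    Submodule.mem_orthogonal_span_range_iff.2 fun i => by
      rw [real_inner_comm, ← Lp.toLp_coeFn (v i) (Lp.memLp (v i)), hF.inner_toLp_toLp, hFv i]
  rw [Submodule.topologicalClosure_eq_top_iff.1 hv, Submodule.mem_bot] at hperp
  filter_upwards [hF.coeFn_toLp, Lp.coeFn_zero ℝ 2 μ] with x hx h0
  rw [← hx, hperp, h0, Pi.zero_apply]

theorem IsCompleteSystem.orthogonal_span_eq_bot {v : ι → Lp ℝ 2 μ}
    (hv : IsCompleteSystem μ fun i => v i) : (Submodule.span ℝ (Set.range v))ᗮ = ⊥ := by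
  refine (Submodule.eq_bot_iff _).2 fun u hu => ?_
  refine Lp.eq_zero_iff_ae_eq_zero.2 (hv u (Lp.memLp u) fun i => ?_)
  rw [← Submodule.mem_orthogonal_span_range_iff.1 hu i, Lp.inner_eq_integral_mul]
  simp only [mul_comm]

theorem IsCompleteSystem.hasSum_inner_sq {v : ι → Lp ℝ 2 μ} (hON : Orthonormal ℝ v)
    (hv : IsCompleteSystem μ fun i => v i) (x : Lp ℝ 2 μ) :
    HasSum (fun i => inner ℝ (v i) x ^ 2) (‖x‖ ^ 2) := by
  have := (HilbertBasis.mkOfOrthogonalEqBot hON hv.orthogonal_span_eq_bot).hasSum_inner_mul_inner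
  simpa only [HilbertBasis.coe_mkOfOrthogonalEqBot, real_inner_self_eq_norm_sq, real_inner_comm x,
    sq] using this x x

theorem MemLp.mul_prod {a : X → ℝ} {b : Y → ℝ} (ha : MemLp a 2 μ) (hb : MemLp b 2 ν) :
    MemLp (fun p : X × Y => a p.1 * b p.2) 2 (μ.prod ν) :=
  (memLp_two_iff_integrable_sq (ha.1.comp_fst.mul hb.1.comp_snd)).2 <| by
    simpa only [Pi.mul_apply, mul_pow] using ha.integrable_sq.mul_prod hb.integrable_sq

section Prod
variable [SigmaFinite μ] [SigmaFinite ν]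

theorem MemLp.ae_memLp_prodMk_left {f : X × Y → ℝ} (hf : MemLp f 2 (μ.prod ν)) :
    ∀ᵐ x ∂μ, MemLp (fun y => f (x, y)) 2 ν := by
  filter_upwards [hf.1.prodMk_left, hf.integrable_sq.prod_right_ae] with x hmeas hsq
  exact (memLp_two_iff_integrable_sq hmeas).2 hsq

theorem MemLp.integral_prod_mul_right {f : X × Y → ℝ} (hf : MemLp f 2 (μ.prod ν)) {b : Y → ℝ}
    (hb : MemLp b 2 ν) : MemLp (fun x => ∫ y, f (x, y) * b y ∂ν) 2 μ := by
  have hmeas := (hf.1.mul hb.1.comp_snd).integral_prod_right'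
  refine (memLp_two_iff_integrable_sq hmeas).2 <|
    (hf.integrable_sq.integral_prod_left.mul_const (∫ y, b y ^ 2 ∂ν)).mono' (hmeas.pow 2) ?_
  filter_upwards [hf.ae_memLp_prodMk_left] with x hx
  rw [Real.norm_eq_abs, abs_of_nonneg (sq_nonneg _)]
  exact sq_integral_mul_le hx hb

theorem IsCompleteSystem.prod [Countable κ] {g : ι → X → ℝ} {h : κ → Y → ℝ}
    (hg : IsCompleteSystem μ g) (hh : IsCompleteSystem ν h)
    (hg2 : ∀ i, MemLp (g i) 2 μ) (hh2 : ∀ j, MemLp (h j) 2 ν) :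
    IsCompleteSystem (μ.prod ν) fun (ij : ι × κ) p => g ij.1 p.1 * h ij.2 p.2 := by
  intro f hf hfgh
  have hpartial : ∀ j, (fun x => ∫ y, f (x, y) * h j y ∂ν) =ᵐ[μ] 0 := fun j =>
    hg _ (hf.integral_prod_mul_right (hh2 j)) fun i => by
      have hint : Integrable (fun p => f p * (g i p.1 * h j p.2)) (μ.prod ν) :=
        hf.integrable_mul ((hg2 i).mul_prod (hh2 j))
      rw [← hfgh (i, j), integral_prod _ hint]
      congr 1 with x
      rw [← integral_mul_const]
      congr 1 with y
      ring
  have hslice : ∀ᵐ x ∂μ, (fun y => f (x, y)) =ᵐ[ν] 0 := by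
    filter_upwards [hf.ae_memLp_prodMk_left, ae_all_iff.2 hpartial] with x hx hxh
    exact hh _ hx hxh
  have hsq : ∫ p, f p ^ 2 ∂(μ.prod ν) = 0 := by
    rw [integral_prod _ hf.integrable_sq]
    refine integral_eq_zero_of_ae ?_
    filter_upwards [hslice] with x hx
    exact integral_eq_zero_of_ae (by filter_upwards [hx] with y hy; simp [hy])
  have hsq_ae := (integral_eq_zero_iff_of_nonneg (fun p => sq_nonneg (f p)) hf.integrable_sq).1 hsq
  filter_upwards [hsq_ae] with p hp
  exact pow_eq_zero_iff two_ne_zero |>.1 hp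

end Prod

theorem IsCompleteSystem.pi [Countable ι] [SigmaFinite μ] {φ : ι → X → ℝ}
    (hφ : IsCompleteSystem μ φ) (hφ2 : ∀ i, MemLp (φ i) 2 μ) :
    ∀ n : ℕ, IsCompleteSystem (Measure.pi fun _ : Fin n => μ)
      fun (kv : Fin n → ι) z => ∏ j, φ (kv j) (z j)
  | 0 => fun F _ hF0 => by
    have hF : F default = 0 := by
      simpa [integral_unique, measureReal_def, Measure.pi_empty_univ] using hF0 default
    exact ae_of_all _ fun z => by rw [Unique.eq_default z, hF, Pi.zero_apply]
  | n + 1 => by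
    refine ((hφ.prod (IsCompleteSystem.pi hφ hφ2 n) hφ2 fun kv =>
      memLp_two_fintype_prod fun j => hφ2 (kv j)).of_measurePreserving
        (measurePreserving_piFinSuccAbove (fun _ => μ) 0)) fun ij => ⟨Fin.cons ij.1 ij.2, ?_⟩
    funext z
    simp [Fin.prod_univ_succ, MeasurableEquiv.piFinSuccAbove_apply, Fin.tail]

section Tensor
variable [SigmaFinite μ] {n : ℕ}

noncomputable def tensorLp (φ : ι → Lp ℝ 2 μ) (kv : Fin n → ι) :
    Lp ℝ 2 (Measure.pi fun _ : Fin n => μ) :=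
  (memLp_two_fintype_prod fun j => Lp.memLp (φ (kv j))).toLp fun z => ∏ j, φ (kv j) (z j)

theorem inner_tensorLp (φ : ι → Lp ℝ 2 μ) (kv : Fin n → ι)
    (B : Lp ℝ 2 (Measure.pi fun _ : Fin n => μ)) :
    inner ℝ (tensorLp φ kv) B = ∫ z, B z * ∏ j, φ (kv j) (z j) ∂Measure.pi fun _ => μ := by
  rw [tensorLp, ← Lp.toLp_coeFn B (Lp.memLp B), MemLp.inner_toLp_toLp, Lp.toLp_coeFn]
  simp only [mul_comm]

theorem orthonormal_tensorLp {φ : ι → Lp ℝ 2 μ} (hφ : Orthonormal ℝ φ) :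
    Orthonormal ℝ (tensorLp (n := n) φ) := by
  classical
  refine orthonormal_iff_ite.2 fun kv kv' => ?_
  rw [tensorLp, tensorLp, MemLp.inner_toLp_toLp]
  simp_rw [← Finset.prod_mul_distrib]
  rw [integral_fintype_prod_eq_prod (fun j x => φ (kv j) x * φ (kv' j) x)]
  simp_rw [← Lp.inner_eq_integral_mul, orthonormal_iff_ite.1 hφ, Finset.prod_boole,
    Finset.mem_univ, true_imp_iff, funext_iff]

theorem isCompleteSystem_tensorLp [Countable ι] {φ : ι → Lp ℝ 2 μ}
    (hφ : (Submodule.span ℝ (Set.range φ)).topologicalClosure = ⊤) :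
    IsCompleteSystem (Measure.pi fun _ : Fin n => μ) fun kv => tensorLp φ kv :=
  ((isCompleteSystem_of_topologicalClosure_span_eq_top hφ).pi (fun i => Lp.memLp (φ i)) n).congr_ae
    fun _ => MemLp.coeFn_toLp _

theorem hasSum_inner_tensorLp_sq [Countable ι] {φ : ι → Lp ℝ 2 μ} (hON : Orthonormal ℝ φ)
    (hφ : (Submodule.span ℝ (Set.range φ)).topologicalClosure = ⊤)
    (B : Lp ℝ 2 (Measure.pi fun _ : Fin n => μ)) :
    HasSum (fun kv => inner ℝ (tensorLp φ kv) B ^ 2) (‖B‖ ^ 2) :=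
  (isCompleteSystem_tensorLp hφ).hasSum_inner_sq (orthonormal_tensorLp hON) B

end Tensor

end MeasureTheory

def InBox (d1 m ℓ : ℕ) {d : ℕ} (kv : Fin d → ℕ) : Prop :=
  (∀ j : Fin d, (j : ℕ) < d1 → kv j < m) ∧ ∀ j : Fin d, d1 ≤ (j : ℕ) → kv j < ℓ

theorem prod_add_one_rpow_le {ι : Type*} [Fintype ι] {s : ℝ} (hs : s ≤ 0) (kv : ι → ℕ)
    {j₀ : ι} {M : ℕ} (hM : 0 < M) (hj₀ : M ≤ kv j₀) :
    ∏ j, ((kv j : ℝ) + 1) ^ s ≤ (M : ℝ) ^ s := by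
  classical
  calc ∏ j, ((kv j : ℝ) + 1) ^ s
      = ((kv j₀ : ℝ) + 1) ^ s * ∏ j ∈ Finset.univ.erase j₀, ((kv j : ℝ) + 1) ^ s :=
        (Finset.mul_prod_erase _ _ (Finset.mem_univ j₀)).symm
    _ ≤ ((kv j₀ : ℝ) + 1) ^ s :=
        mul_le_of_le_one_right (by positivity) <| Finset.prod_le_one (fun _ _ => by positivity)
          fun j _ => Real.rpow_le_one_of_one_le_of_nonpos (by simp) hs
    _ ≤ (M : ℝ) ^ s :=
        Real.rpow_le_rpow_of_nonpos (by exact_mod_cast hM)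
          (by linarith [(Nat.cast_le (α := ℝ)).2 hj₀]) hs

theorem prod_add_one_rpow_le_of_not_inBox {d1 d2 m ℓ : ℕ} {s : ℝ} (hs : s ≤ 0) (hm : 0 < m)
    (hℓ : 0 < ℓ) {kv : Fin (d1 + d2) → ℕ} (hkv : ¬InBox d1 m ℓ kv) :
    ∏ j, ((kv j : ℝ) + 1) ^ s ≤ (d1 : ℝ) * (m : ℝ) ^ s + (d2 : ℝ) * (ℓ : ℝ) ^ s := by
  simp only [InBox, not_and_or, not_forall, not_lt] at hkv
  rcases hkv with ⟨j, hj, hmj⟩ | ⟨j, hj, hℓj⟩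
  · have hd1 : (1 : ℝ) ≤ d1 := by exact_mod_cast (by omega : 1 ≤ d1)
    calc _ ≤ (m : ℝ) ^ s := prod_add_one_rpow_le hs kv hm hmj
      _ ≤ (d1 : ℝ) * (m : ℝ) ^ s := le_mul_of_one_le_left (by positivity) hd1
      _ ≤ _ := le_add_of_nonneg_right (by positivity)
  · have hd2 : (1 : ℝ) ≤ d2 := by exact_mod_cast (by omega : 1 ≤ d2)
    calc _ ≤ (ℓ : ℝ) ^ s := prod_add_one_rpow_le hs kv hℓ hℓj
      _ ≤ (d2 : ℝ) * (ℓ : ℝ) ^ s := le_mul_of_one_le_left (by positivity) hd2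
      _ ≤ _ := le_add_of_nonneg_left (by positivity)

theorem prod_le_pow_mul_prod {n : ℕ} {f g : Fin n → ℝ} {c : ℝ} (hf : ∀ i, 0 ≤ f i)
    (hfg : ∀ i, f i ≤ c * g i) : ∏ i, f i ≤ c ^ n * ∏ i, g i := by
  calc ∏ i, f i ≤ ∏ i, c * g i := Finset.prod_le_prod (fun i _ => hf i) fun i _ => hfg i
    _ = c ^ n * ∏ i, g i := by
        rw [Finset.prod_mul_distrib, Finset.prod_const, Finset.card_univ, Fintype.card_fin]

theorem tensorCoef_eq_inner (d : ℕ) (φ : ℕ → Lp ℝ 2 unitMeasure)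
    (B : Lp ℝ 2 (Measure.pi fun _ : Fin d => unitMeasure)) (kv : Fin d → ℕ) :
    tensorCoef d φ B kv = inner ℝ (tensorLp φ kv) B :=
  (inner_tensorLp φ kv B).symm

theorem rkhs_projection_bias_general
    (α c1 c2 : ℝ) (hα : 0 < α) (hc1 : 0 < c1) (hc2 : 0 < c2)
    (d1 d2 : ℕ) :
    ∃ C : ℝ, 0 < C ∧
      ∀ (lam : ℕ → ℝ)
        (_hlam : ∀ k : ℕ, c1 * ((k : ℝ) + 1) ^ (-(2 * α)) ≤ lam k ∧
          lam k ≤ c2 * ((k : ℝ) + 1) ^ (-(2 * α)))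
        (φ : ℕ → Lp ℝ 2 unitMeasure) (_hON : Orthonormal ℝ φ)
        (_htotal : (Submodule.span ℝ (Set.range φ)).topologicalClosure = ⊤)
        (m ℓ : ℕ) (_hm : 0 < m) (_hℓ : 0 < ℓ)
        (A Abar : Lp ℝ 2 (Measure.pi fun _ : Fin (d1 + d2) => unitMeasure))
        (_hfinite : Summable fun kv : Fin (d1 + d2) → ℕ =>
          (∏ j, lam (kv j))⁻¹ * tensorCoef (d1 + d2) φ A kv ^ 2)
        (_hkeep : ∀ kv : Fin (d1 + d2) → ℕ,
          ((∀ j : Fin (d1 + d2), (j : ℕ) < d1 → kv j < m) ∧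
            (∀ j : Fin (d1 + d2), d1 ≤ (j : ℕ) → kv j < ℓ)) →
          tensorCoef (d1 + d2) φ Abar kv = tensorCoef (d1 + d2) φ A kv)
        (_hdrop : ∀ kv : Fin (d1 + d2) → ℕ,
          ¬((∀ j : Fin (d1 + d2), (j : ℕ) < d1 → kv j < m) ∧
            (∀ j : Fin (d1 + d2), d1 ≤ (j : ℕ) → kv j < ℓ)) →
          tensorCoef (d1 + d2) φ Abar kv = 0),
        ‖A - Abar‖ ^ 2 ≤
          C * ((d1 : ℝ) * (m : ℝ) ^ (-(2 * α)) + (d2 : ℝ) * (ℓ : ℝ) ^ (-(2 * α))) *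
            ∑' kv : Fin (d1 + d2) → ℕ,
              (∏ j, lam (kv j))⁻¹ * tensorCoef (d1 + d2) φ A kv ^ 2 := by
  refine ⟨c2 ^ (d1 + d2), by positivity, ?_⟩
  intro lam hlam φ hON htotal m ℓ hm hℓ A Abar hfinite hkeep hdrop
  have hlam_pos : ∀ k, 0 < lam k := fun k => (by positivity : 0 < c1 * _).trans_le (hlam k).1
  have hparseval := hasSum_inner_tensorLp_sq hON htotal (A - Abar)
  simp_rw [inner_sub_right, ← tensorCoef_eq_inner] at hparseval
  rw [← hparseval.tsum_eq, ← tsum_mul_left]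
  refine hparseval.summable.tsum_le_tsum (fun kv => ?_) (hfinite.mul_left _)
  have hP : 0 < ∏ j, lam (kv j) := Finset.prod_pos fun j _ => hlam_pos _
  by_cases hbox : InBox d1 m ℓ kv
  · rw [hkeep kv hbox, sub_self, zero_pow two_ne_zero]
    exact mul_nonneg (by positivity) (mul_nonneg (inv_nonneg.2 hP.le) (sq_nonneg _))
  · rw [hdrop kv hbox, sub_zero]
    have hPK : ∏ j, lam (kv j) ≤ c2 ^ (d1 + d2) *
        ((d1 : ℝ) * (m : ℝ) ^ (-(2 * α)) + (d2 : ℝ) * (ℓ : ℝ) ^ (-(2 * α))) :=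
      (prod_le_pow_mul_prod (fun j => (hlam_pos _).le) fun j => (hlam _).2).trans
        (mul_le_mul_of_nonneg_left (prod_add_one_rpow_le_of_not_inBox (by linarith) hm hℓ hbox)
          (by positivity))
    calc tensorCoef (d1 + d2) φ A kv ^ 2
        = (∏ j, lam (kv j)) * ((∏ j, lam (kv j))⁻¹ * tensorCoef (d1 + d2) φ A kv ^ 2) := by
          field_simp
      _ ≤ _ := mul_le_mul_of_nonneg_right hPK (mul_nonneg (inv_nonneg.2 hP.le) (sq_nonneg _))

/-- **Bias of the projection onto `M ⊗ L` in a tensor-product RKHS.**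
Let `K = Σ_k λ_k φ_k ⊗ φ_k` be a Mercer kernel on `[0,1]²` with `λ_k ≍ k^{−2α}`
and `(φ_k)` an orthonormal basis of `L²([0,1])`.  For `A` in the tensor RKHS
`H(K)^{⊗d}` (`d = d1 + d2`) with squared norm
`Σ_{kv} (Π_j λ_{kv_j})⁻¹ A[φ_{kv}]²`, and `Ā = A ×_x P_M ×_y P_L` the projection
keeping exactly the coefficients with all first-block indices `< m` and all
second-block indices `< ℓ`, one has
`‖A − Ā‖²_{L²} ≤ C (d1·m^{−2α} + d2·ℓ^{−2α}) ‖A‖²_{H(K)^{⊗d}}`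
for a constant `C`. -/
theorem rkhs_projection_bias
    (α c1 c2 : ℝ) (hα : 0 < α) (hc1 : 0 < c1) (hc2 : 0 < c2)
    (d1 d2 : ℕ) (hd1 : 0 < d1) (hd2 : 0 < d2) :
    ∃ C : ℝ, 0 < C ∧
      ∀ (lam : ℕ → ℝ)
        (_hlam : ∀ k : ℕ, c1 * ((k : ℝ) + 1) ^ (-(2 * α)) ≤ lam k ∧
          lam k ≤ c2 * ((k : ℝ) + 1) ^ (-(2 * α)))
        (φ : ℕ → Lp ℝ 2 unitMeasure) (_hON : Orthonormal ℝ φ)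
        (_htotal : (Submodule.span ℝ (Set.range φ)).topologicalClosure = ⊤)
        (m ℓ : ℕ) (_hm : 0 < m) (_hℓ : 0 < ℓ)
        (A Abar : Lp ℝ 2 (Measure.pi fun _ : Fin (d1 + d2) => unitMeasure))
        (_hfinite : Summable fun kv : Fin (d1 + d2) → ℕ =>
          (∏ j, lam (kv j))⁻¹ * tensorCoef (d1 + d2) φ A kv ^ 2)
        (_hkeep : ∀ kv : Fin (d1 + d2) → ℕ,
          ((∀ j : Fin (d1 + d2), (j : ℕ) < d1 → kv j < m) ∧
            (∀ j : Fin (d1 + d2), d1 ≤ (j : ℕ) → kv j < ℓ)) →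
          tensorCoef (d1 + d2) φ Abar kv = tensorCoef (d1 + d2) φ A kv)
        (_hdrop : ∀ kv : Fin (d1 + d2) → ℕ,
          ¬((∀ j : Fin (d1 + d2), (j : ℕ) < d1 → kv j < m) ∧
            (∀ j : Fin (d1 + d2), d1 ≤ (j : ℕ) → kv j < ℓ)) →
          tensorCoef (d1 + d2) φ Abar kv = 0),
        ‖A - Abar‖ ^ 2 ≤
          C * ((d1 : ℝ) * (m : ℝ) ^ (-(2 * α)) + (d2 : ℝ) * (ℓ : ℝ) ^ (-(2 * α))) *
            ∑' kv : Fin (d1 + d2) → ℕ,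
              (∏ j, lam (kv j))⁻¹ * tensorCoef (d1 + d2) φ A kv ^ 2 :=
  rkhs_projection_bias_general α c1 c2 hα hc1 hc2 d1 d2
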